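/- arXiv:2510.25749 — 3 statements merged into one kernel-verified Lean document; each statement's English description precedes it below -/
import Mathlib

section
/- For any m ≥ 1 and variables x_1,…,x_m in a commutative ring, the generating-function identity ∏_{i=1}^m (x_i t)/(e^{x_i t} - 1) = exp(Σ_{k≥1} (-1)^{k-1} B_k p_k t^k / (k·k!)) holds as an identity of formal power series in t, where p_k = Σ_{i=1}^m x_i^k and B_k is the k-th Bernoulli number. -/
open scoped BigOperators

/-- Formal exponential of a power series with zero constant term:
its `n`-th coefficient is `∑_{j≤n} coeff n (f^j) / j!`. -/
noncomputable def expPS {R : Type*} [CommRing R] [Algebra ℚ R]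
    (f : PowerSeries R) : PowerSeries R :=
  PowerSeries.mk fun n =>
    ∑ j ∈ Finset.range (n + 1),
      ((Nat.factorial j : ℚ)⁻¹) • (PowerSeries.coeff (R := R) n (f ^ j))

/-- The power sum `p_k = ∑_{i=1}^m x_i^k`. -/
noncomputable def psum (m k : ℕ) : MvPolynomial (Fin m) ℚ :=
  ∑ i : Fin m, MvPolynomial.X i ^ k

/-!
In one variable, `L(t) = ∑_{k ≥ 1} (-1)^(k-1) B_k t^k / (k·k!)` satisfies `t·L' = 1 - t - B(t)`
with `B(t) = t/(e^t - 1)`, because the odd Bernoulli numbers beyond `B_1` vanish. Differentiating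
`B(t)·(e^t - 1) = t` then gives `B' = L'·B`, which is also the differential equation of `exp L`;
both have constant term `1`, so `B = exp L`. Substituting `t ↦ x_i t` and using
`exp (f + g) = exp f · exp g` gives the product formula.
-/

namespace PowerSeries

theorem coeff_pow_eq_zero_of_constantCoeff_eq_zero {R : Type*} [CommRing R] {f : R⟦X⟧}
    (hf : constantCoeff f = 0) {n j : ℕ} (h : n < j) : coeff n (f ^ j) = 0 :=
  coeff_of_lt_order n ((Nat.cast_lt.2 h).trans_le (le_order_pow_of_constantCoeff_eq_zero j hf))

theorem eq_of_derivative_eq_mul {R : Type*} [CommRing R] [IsAddTorsionFree R] {u f g : R⟦X⟧}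
    (hf : d⁄dX R f = u * f) (hg : d⁄dX R g = u * g) (hg₀ : IsUnit (constantCoeff g))
    (h₀ : constantCoeff f = constantCoeff g) : f = g := by
  obtain ⟨G, rfl⟩ := isUnit_iff_constantCoeff.2 hg₀
  have hquot : d⁄dX R (f * ↑G⁻¹) = d⁄dX R 1 := by
    rw [Derivation.leibniz, derivative_inv, hf, hg, derivative_one, smul_eq_mul, smul_eq_mul]
    linear_combination (-(u * f * ↑G⁻¹)) * G.inv_mul
  have hconst : constantCoeff (f * ↑G⁻¹ : R⟦X⟧) = constantCoeff 1 := by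
    rw [map_mul, h₀, ← map_mul, G.mul_inv]
  calc f = f * ↑G⁻¹ * ↑G := by rw [mul_assoc, G.inv_mul, mul_one]
    _ = G := by rw [derivative.ext hquot hconst, one_mul]

end PowerSeries

open PowerSeries

section ExpPS

variable {A : Type*} [CommRing A] [Algebra ℚ A]

theorem expPS_eq_subst_exp {f : A⟦X⟧} (hf : constantCoeff f = 0) :
    expPS f = (exp A).subst f := by
  ext n
  rw [expPS, coeff_mk, coeff_subst' (HasSubst.of_constantCoeff_zero' hf),
    finsum_eq_sum_of_support_subset (s := Finset.range (n + 1))]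
  · refine Finset.sum_congr rfl fun j _ => ?_
    rw [coeff_exp, smul_eq_mul, ← Algebra.smul_def, one_div]
  · intro j hj
    rw [Function.mem_support] at hj
    rw [Finset.coe_range, Set.mem_Iio]
    by_contra! h
    exact hj (by rw [coeff_pow_eq_zero_of_constantCoeff_eq_zero hf h, smul_zero])

@[simp]
theorem constantCoeff_expPS (f : A⟦X⟧) : constantCoeff (expPS f) = 1 := by
  rw [← coeff_zero_eq_constantCoeff_apply, expPS, coeff_mk]
  simp

theorem derivative_expPS {f : A⟦X⟧} (hf : constantCoeff f = 0) :
    d⁄dX A (expPS f) = d⁄dX A f * expPS f := by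
  rw [expPS_eq_subst_exp hf, derivative_subst (HasSubst.of_constantCoeff_zero' hf),
    derivative_exp, mul_comm]

theorem expPS_rescale (y : A) (f : A⟦X⟧) : expPS (rescale y f) = rescale y (expPS f) := by
  ext n
  simp only [expPS, coeff_mk, coeff_rescale, ← map_pow, Finset.mul_sum, mul_smul_comm]

theorem expPS_zero : expPS (0 : A⟦X⟧) = 1 := by
  have := IsAddTorsionFree.of_module_rat A
  refine derivative.ext ?_ (by simp)
  rw [derivative_expPS (map_zero _), map_zero, zero_mul, derivative_one]

theorem expPS_add {f g : A⟦X⟧} (hf : constantCoeff f = 0) (hg : constantCoeff g = 0) :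
    expPS (f + g) = expPS f * expPS g := by
  have := IsAddTorsionFree.of_module_rat A
  refine eq_of_derivative_eq_mul (u := d⁄dX A (f + g)) ?_ ?_ (by simp) (by simp)
  · exact derivative_expPS (by rw [map_add, hf, hg, add_zero])
  · rw [Derivation.leibniz, derivative_expPS hf, derivative_expPS hg, map_add, smul_eq_mul,
      smul_eq_mul]
    ring

theorem expPS_sum {ι : Type*} (s : Finset ι) (f : ι → A⟦X⟧)
    (hf : ∀ i ∈ s, constantCoeff (f i) = 0) :
    expPS (∑ i ∈ s, f i) = ∏ i ∈ s, expPS (f i) := by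
  classical
  induction s using Finset.induction_on with
  | empty => exact expPS_zero
  | insert a s ha ih =>
    have hs : ∀ i ∈ s, constantCoeff (f i) = 0 := fun i hi => hf i (Finset.mem_insert_of_mem hi)
    rw [Finset.sum_insert ha, Finset.prod_insert ha,
      expPS_add (hf a (Finset.mem_insert_self a s)) (by rw [map_sum]; exact Finset.sum_eq_zero hs),
      ih hs]

end ExpPS

section LogBernoulli

variable (A : Type*) [CommRing A] [Algebra ℚ A]

noncomputable def logBernoulliPowerSeries : A⟦X⟧ :=
  mk fun k => if k = 0 then 0
    else algebraMap ℚ A ((-1) ^ (k - 1) * bernoulli k / (k * k.factorial))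

theorem constantCoeff_logBernoulliPowerSeries :
    constantCoeff (logBernoulliPowerSeries A) = 0 := by
  rw [← coeff_zero_eq_constantCoeff_apply, logBernoulliPowerSeries, coeff_mk, if_pos rfl]

theorem X_mul_derivative_logBernoulliPowerSeries :
    X * d⁄dX A (logBernoulliPowerSeries A) = 1 - X - bernoulliPowerSeries A := by
  ext n
  rcases n with _ | k
  · simp [bernoulliPowerSeries]
  rw [coeff_succ_X_mul, coeff_derivative]
  simp only [logBernoulliPowerSeries, bernoulliPowerSeries, coeff_mk, map_sub, coeff_one, coeff_X,
    Nat.succ_ne_zero, if_false]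
  rw [show (k : A) + 1 = algebraMap ℚ A (k + 1) by simp, ← map_mul,
    show (0 - if k + 1 = 1 then (1 : A) else 0) = algebraMap ℚ A (0 - if k + 1 = 1 then 1 else 0) by
      split_ifs <;> simp, ← map_sub]
  congr 1
  rcases k with _ | j
  · norm_num [bernoulli_one]
  rw [if_neg (by omega), Nat.add_sub_cancel]
  rcases Nat.even_or_odd (j + 1) with hj | hj
  · rw [bernoulli_eq_zero_of_odd hj.add_one (by omega)]
    simp
  · rw [hj.neg_one_pow, Nat.factorial_succ (j + 1)]
    push_cast
    field_simp
    ring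

theorem derivative_bernoulliPowerSeries :
    d⁄dX A (bernoulliPowerSeries A) =
      d⁄dX A (logBernoulliPowerSeries A) * bernoulliPowerSeries A := by
  have hB := bernoulliPowerSeries_mul_exp_sub_one A
  have hdB := congrArg (d⁄dX A) hB
  rw [Derivation.leibniz, map_sub, derivative_exp, derivative_one, sub_zero, derivative_X,
    smul_eq_mul, smul_eq_mul] at hdB
  have hL := X_mul_derivative_logBernoulliPowerSeries A
  -- `X·(B' - L'·B) = B·(X - B·(exp - 1)) = 0`, and `X` is not a zero divisor.
  refine X_mul_cancel ?_
  linear_combination (-d⁄dX A (bernoulliPowerSeries A) - bernoulliPowerSeries A) * hB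
    + bernoulliPowerSeries A * hdB - bernoulliPowerSeries A * hL

theorem bernoulliPowerSeries_eq_expPS :
    bernoulliPowerSeries A = expPS (logBernoulliPowerSeries A) := by
  have := IsAddTorsionFree.of_module_rat A
  refine eq_of_derivative_eq_mul (derivative_bernoulliPowerSeries A)
    (derivative_expPS (constantCoeff_logBernoulliPowerSeries A)) (by simp) ?_
  rw [constantCoeff_expPS, ← coeff_zero_eq_constantCoeff_apply, bernoulliPowerSeries, coeff_mk]
  simp

theorem rescale_bernoulliPowerSeries (y : A) :
    rescale y (bernoulliPowerSeries A) = mk fun n => (bernoulli n / n.factorial : ℚ) • y ^ n := by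
  ext n
  rw [coeff_rescale, bernoulliPowerSeries, coeff_mk, coeff_mk, Algebra.smul_def, mul_comm]

theorem constantCoeff_rescale_logBernoulliPowerSeries (y : A) :
    constantCoeff (rescale y (logBernoulliPowerSeries A)) = 0 := by
  rw [← coeff_zero_eq_constantCoeff_apply, coeff_rescale, coeff_zero_eq_constantCoeff_apply,
    constantCoeff_logBernoulliPowerSeries, mul_zero]

end LogBernoulli

theorem prod_bernoulli_eq_exp_general (m : ℕ) :
    (∏ i : Fin m, PowerSeries.mk fun n =>
        ((bernoulli n / (Nat.factorial n : ℚ)) • (MvPolynomial.X i ^ n) :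
          MvPolynomial (Fin m) ℚ)) =
    expPS (PowerSeries.mk fun k =>
        if k = 0 then 0
        else ((-1 : ℚ) ^ (k - 1) * bernoulli k / (k * Nat.factorial k)) • psum m k) := by
  simp_rw [← rescale_bernoulliPowerSeries, bernoulliPowerSeries_eq_expPS, ← expPS_rescale]
  rw [← expPS_sum _ _ fun i _ => constantCoeff_rescale_logBernoulliPowerSeries _ _]
  congr 1
  ext k : 1
  simp only [map_sum, coeff_rescale, logBernoulliPowerSeries, coeff_mk]
  split_ifs
  · simp
  · simp only [psum, Algebra.smul_def, Finset.mul_sum, Algebra.commutes]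

/-- `∏_{i=1}^m (x_i t)/(e^{x_i t}-1) = exp(∑_{k≥1} (-1)^{k-1} B_k p_k t^k/(k·k!))`. -/
theorem prod_bernoulli_eq_exp (m : ℕ) (hm : 1 ≤ m) :
    (∏ i : Fin m, PowerSeries.mk fun n =>
        ((bernoulli n / (Nat.factorial n : ℚ)) • (MvPolynomial.X i ^ n) :
          MvPolynomial (Fin m) ℚ)) =
    expPS (PowerSeries.mk fun k =>
        if k = 0 then 0
        else ((-1 : ℚ) ^ (k - 1) * bernoulli k / (k * Nat.factorial k)) • psum m k) :=
  prod_bernoulli_eq_exp_general m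
end

section
/- For m = 2 and S_4 = p_2^2 = (x_1^2 + x_2^2)^2: with y_1 = y_2 = 1, s^2_1 = (x_1, x_2 - x_1), s^2_2 = (x_1 - x_2, x_2), the difference S_4(x)/(x_1 x_2) - S_4(s^2_1)/(x_1(x_2-x_1)) - S_4(s^2_2)/((x_1-x_2)x_2) equals the homogeneous symmetric polynomial (-7 p_1^2 + 21 p_2)/2 where p_1 = x_1 + x_2, p_2 = x_1^2 + x_2^2. -/
/-- For `m = 2`, `S_4 = p_2²`, `y₁ = y₂ = 1`: the difference is the homogeneous
symmetric polynomial `(-7 p₁² + 21 p₂)/2` with `p₁ = x₁+x₂`, `p₂ = x₁²+x₂²`,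
as rational functions over `ℚ`. -/
theorem stmt15 (x₁ x₂ : ℚ)
    (h₁ : x₁ ≠ 0) (h₂ : x₂ ≠ 0) (h₃ : x₁ - x₂ ≠ 0) :
    (x₁ ^ 2 + x₂ ^ 2) ^ 2 / (x₁ * x₂)
      - (x₁ ^ 2 + (x₂ - x₁) ^ 2) ^ 2 / (x₁ * (x₂ - x₁))
      - ((x₁ - x₂) ^ 2 + x₂ ^ 2) ^ 2 / ((x₁ - x₂) * x₂)
    = (-7 * (x₁ + x₂) ^ 2 + 21 * (x₁ ^ 2 + x₂ ^ 2)) / 2 := by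
  have h4 : x₂ - x₁ ≠ 0 := fun h => h₃ (by linarith [sub_eq_zero.mp h]);
  field_simp
  ring
end

section
/- For any m ≥ 1, the Bernoulli polynomial of higher order of degree 2 satisfies B_2(x_1,…,x_m) = (3 p_1^2 - p_2)/12, where p_k = Σ_{i=1}^m x_i^k, and of degree 3 satisfies B_3(x_1,…,x_m) = -p_1(p_1^2 - p_2)/8. -/
open scoped BigOperators

/-- The Bernoulli polynomial of higher order `B_n(x_1,…,x_m)`, defined by
`∏_{i=1}^m (x_i t)/(e^{x_i t}-1) = ∑_{n≥0} B_n(x^m) t^n/n!`. -/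
noncomputable def higherBernoulli (m n : ℕ) : MvPolynomial (Fin m) ℚ :=
  (Nat.factorial n : ℚ) •
    PowerSeries.coeff (R := MvPolynomial (Fin m) ℚ) n
      (∏ i : Fin m, PowerSeries.mk fun k =>
        (bernoulli k / (Nat.factorial k : ℚ)) • (MvPolynomial.X i ^ k))

/-!
Each factor `x_i t / (e^{x_i t} - 1)` is `1 + a_i t + b_i t² + c_i t³ + ⋯` with `a_i = B_1 x_i`,
`b_i = B_2 x_i² / 2` and `c_i = 0`. For any product of series with constant term `1`, the
coefficients of `t²` and `t³` are universal polynomials in `∑ a_i`, `∑ a_i²`, `∑ a_i³`, `∑ b_i`,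
`∑ a_i b_i` and `∑ c_i`. For the Bernoulli factors each of these sums is a rational multiple of a
power sum `p_k`, and in degree `3` the two `p_3` contributions cancel.
-/

open Finset
open scoped PowerSeries

namespace PowerSeries

variable {ι R : Type*} [CommRing R]

theorem coeff_succ_mul_of_constantCoeff_eq_one {g h : R⟦X⟧} (hg : constantCoeff g = 1) (n : ℕ) :
    coeff (n + 1) (g * h) =
      coeff (n + 1) h + ∑ k ∈ range (n + 1), coeff (k + 1) g * coeff (n - k) h := by
  rw [coeff_mul, Nat.sum_antidiagonal_eq_sum_range_succ (fun i j => coeff i g * coeff j h),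
    sum_range_succ']
  simp [hg, add_comm]

variable {f : ι → R⟦X⟧}

theorem constantCoeff_prod_eq_one (h0 : ∀ i, constantCoeff (f i) = 1) (s : Finset ι) :
    constantCoeff (∏ i ∈ s, f i) = 1 := by
  simp [map_prod, h0]

theorem coeff_one_prod (h0 : ∀ i, constantCoeff (f i) = 1) (s : Finset ι) :
    coeff 1 (∏ i ∈ s, f i) = ∑ i ∈ s, coeff 1 (f i) := by
  classical
  induction s using Finset.induction_on with
  | empty => simp
  | insert a s ha ih =>
    rw [prod_insert ha, sum_insert ha, coeff_succ_mul_of_constantCoeff_eq_one (h0 a), ih]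
    simp [constantCoeff_prod_eq_one h0, add_comm]

theorem two_mul_coeff_two_prod (h0 : ∀ i, constantCoeff (f i) = 1) (s : Finset ι) :
    2 * coeff 2 (∏ i ∈ s, f i) =
      (∑ i ∈ s, coeff 1 (f i)) ^ 2 - ∑ i ∈ s, coeff 1 (f i) ^ 2 +
        2 * ∑ i ∈ s, coeff 2 (f i) := by
  classical
  induction s using Finset.induction_on with
  | empty => simp
  | insert a s ha ih =>
    rw [prod_insert ha, coeff_succ_mul_of_constantCoeff_eq_one (h0 a)]
    simp only [sum_insert ha, sum_range_succ, sum_range_zero, coeff_one_prod h0, Nat.reduceSub,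
      Nat.reduceAdd, coeff_zero_eq_constantCoeff_apply, constantCoeff_prod_eq_one h0]
    linear_combination ih

theorem six_mul_coeff_three_prod (h0 : ∀ i, constantCoeff (f i) = 1) (s : Finset ι) :
    6 * coeff 3 (∏ i ∈ s, f i) =
      (∑ i ∈ s, coeff 1 (f i)) ^ 3
        - 3 * (∑ i ∈ s, coeff 1 (f i)) * ∑ i ∈ s, coeff 1 (f i) ^ 2
        + 2 * ∑ i ∈ s, coeff 1 (f i) ^ 3
        + 6 * (∑ i ∈ s, coeff 1 (f i)) * ∑ i ∈ s, coeff 2 (f i)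
        - 6 * ∑ i ∈ s, coeff 1 (f i) * coeff 2 (f i)
        + 6 * ∑ i ∈ s, coeff 3 (f i) := by
  classical
  induction s using Finset.induction_on with
  | empty => simp
  | insert a s ha ih =>
    rw [prod_insert ha, coeff_succ_mul_of_constantCoeff_eq_one (h0 a)]
    have h2 := two_mul_coeff_two_prod h0 s
    simp only [sum_insert ha, sum_range_succ, sum_range_zero, coeff_one_prod h0, Nat.reduceSub,
      Nat.reduceAdd, coeff_zero_eq_constantCoeff_apply, constantCoeff_prod_eq_one h0]
    linear_combination ih + 3 * coeff 1 (f a) * h2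

end PowerSeries

open PowerSeries (coeff constantCoeff mk)
open MvPolynomial (C)

theorem bernoulli_three : bernoulli 3 = 0 := by
  rw [bernoulli_eq_bernoulli'_of_ne_one (by decide), bernoulli'_three]

section BernoulliFactor

variable {σ : Type*}

noncomputable def bernoulliFactor (i : σ) : (MvPolynomial σ ℚ)⟦X⟧ :=
  mk fun k => (bernoulli k / k.factorial : ℚ) • MvPolynomial.X i ^ k

theorem coeff_bernoulliFactor (i : σ) (k : ℕ) :
    coeff k (bernoulliFactor i) = C (bernoulli k / k.factorial) * MvPolynomial.X i ^ k := by
  rw [bernoulliFactor, PowerSeries.coeff_mk, MvPolynomial.smul_eq_C_mul]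

theorem constantCoeff_bernoulliFactor (i : σ) :
    constantCoeff (bernoulliFactor i) = 1 := by
  simp [← PowerSeries.coeff_zero_eq_constantCoeff_apply, coeff_bernoulliFactor]

variable {m : ℕ}

theorem sum_coeff_bernoulliFactor (k : ℕ) :
    ∑ i : Fin m, coeff k (bernoulliFactor i) = C (bernoulli k / k.factorial) * psum m k := by
  simp [psum, mul_sum, coeff_bernoulliFactor]

theorem sum_coeff_bernoulliFactor_pow (k n : ℕ) :
    ∑ i : Fin m, coeff k (bernoulliFactor i) ^ n =
      C ((bernoulli k / k.factorial) ^ n) * psum m (k * n) := by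
  simp [psum, mul_sum, coeff_bernoulliFactor, mul_pow, pow_mul]

theorem sum_coeff_bernoulliFactor_mul (k l : ℕ) :
    ∑ i : Fin m, coeff k (bernoulliFactor i) * coeff l (bernoulliFactor i) =
      C (bernoulli k / k.factorial * (bernoulli l / l.factorial)) * psum m (k + l) := by
  simp only [psum, mul_sum, coeff_bernoulliFactor, map_mul, pow_add]
  exact sum_congr rfl fun i _ => by ring

end BernoulliFactor

theorem higherBernoulli_eq_smul_coeff_prod (m n : ℕ) :
    higherBernoulli m n = (n.factorial : ℚ) • coeff n (∏ i, bernoulliFactor (σ := Fin m) i) :=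
  rfl

theorem higherBernoulli_two_three_general (m : ℕ) :
    higherBernoulli m 2 =
      MvPolynomial.C ((1 : ℚ) / 12) * (3 * psum m 1 ^ 2 - psum m 2) ∧
    higherBernoulli m 3 =
      MvPolynomial.C (-(1 : ℚ) / 8) * (psum m 1 * (psum m 1 ^ 2 - psum m 2)) := by
  have hconst := constantCoeff_bernoulliFactor (σ := Fin m)
  have h2 := PowerSeries.two_mul_coeff_two_prod hconst univ
  have h3 := PowerSeries.six_mul_coeff_three_prod hconst univ
  simp only [sum_coeff_bernoulliFactor, sum_coeff_bernoulliFactor_pow,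
    sum_coeff_bernoulliFactor_mul] at h2 h3
  norm_num [bernoulli_three, Nat.factorial] at h2 h3
  rw [higherBernoulli_eq_smul_coeff_prod, higherBernoulli_eq_smul_coeff_prod]
  constructor
  · linear_combination (norm := polynomial) h2
  · linear_combination (norm := polynomial) h3

/-- `B₂ = (3p₁² - p₂)/12` and `B₃ = -p₁(p₁² - p₂)/8`. -/
theorem higherBernoulli_two_three (m : ℕ) (hm : 1 ≤ m) :
    higherBernoulli m 2 =
      MvPolynomial.C ((1 : ℚ) / 12) * (3 * psum m 1 ^ 2 - psum m 2) ∧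
    higherBernoulli m 3 =
      MvPolynomial.C (-(1 : ℚ) / 8) * (psum m 1 * (psum m 1 ^ 2 - psum m 2)) :=
  higherBernoulli_two_three_general m
end
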